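/- The cyclic Burrows–Wheeler Transform of S_σ equals the string (σ−1)·(0011⋯(σ−1)(σ−1))^{σ−1}·0011⋯(σ−3)(σ−3)(σ−2)(σ−1)(σ−2), where (0011⋯(σ−1)(σ−1)) denotes the string in which each symbol 0,…,σ−1 appears twice in increasing order. -/

import Mathlib

open List

/-- Block for symbol `a`: pairs (a,0)(a,1)⋯(a,σ-1) followed by a repeat of (a,σ-1). -/
def block (σ a : ℕ) : List ℕ :=
  ((List.range σ).flatMap fun b => [a, b]) ++ [a, σ - 1]

/-- The string S_σ: blocks for a = 0,…,σ-2 followed by the pair (σ-1,σ-1). -/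
def Sstr (σ : ℕ) : List ℕ :=
  ((List.range (σ - 1)).flatMap fun a => block σ a) ++ [σ - 1, σ - 1]

/-- Rotation of `S` by offset `i`. -/
def rot (S : List ℕ) (i : ℕ) : List ℕ := S.drop i ++ S.take i

/-- Cyclic k-gram of `S` starting at position `i` (indices mod `S.length`). -/
def cyc (S : List ℕ) (i k : ℕ) : List ℕ :=
  (List.range k).map fun j => S.getD ((i + j) % S.length) 0

/-- Number of cyclic occurrences of `u` in `S`. -/
def cOcc (S u : List ℕ) : ℕ :=
  ((List.range S.length).filter fun i => cyc S i u.length = u).length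

/-- `u` occurs as a cyclic substring of `S`. -/
def cOccurs (S u : List ℕ) : Prop := 0 < cOcc S u

/-- Number of runs (maximal blocks of equal symbols) of a list. -/
def runsCount (l : List ℕ) : ℕ := (l.destutter (· ≠ ·)).length

/-- Cyclic Burrows–Wheeler transform: sort all rotations lexicographically,
read the last column. -/
def cBWT (S : List ℕ) : List ℕ :=
  (((List.range S.length).map fun i => rot S i).insertionSort (· ≤ ·)).map
    fun ρ => ρ.getD (S.length - 1) 0

/-- Terminated string `t$`: symbols shifted by +1 and sentinel `0 = $` appended,
so the sentinel is strictly smaller than all alphabet symbols. -/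
def term (t : List ℕ) : List ℕ := (t.map (· + 1)) ++ [0]

/-- BWT of the terminated string `t$`: last column of the sorted rotation matrix. -/
def bwt (t : List ℕ) : List ℕ :=
  (((List.range (term t).length).map fun i => rot (term t) i).insertionSort (· ≤ ·)).map
    fun ρ => ρ.getD ((term t).length - 1) 0

/-- `x` is right-maximal in `w`: two distinct right extensions of `x` occur in `w`. -/
def RightMaximal (w x : List ℕ) : Prop :=
  ∃ a b : ℕ, a ≠ b ∧ (x ++ [a]) <:+: w ∧ (x ++ [b]) <:+: w

/-- The set of right-extensions of `w`. -/
def ExtSet (w : List ℕ) : Set (List ℕ) :=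
  {y | ∃ x a, RightMaximal w x ∧ y = x ++ [a] ∧ y <:+: w}

/-- Super-maximal right-extensions: right-extensions that are not a proper suffix
of another right-extension. -/
def SuperMax (w : List ℕ) : Set (List ℕ) :=
  {y ∈ ExtSet w | ∀ z ∈ ExtSet w, y <:+ z → y = z}

/-- χ: size of a smallest suffixient set = number of super-maximal right-extensions. -/
noncomputable def chi (w : List ℕ) : ℕ := (SuperMax w).ncard

/-- The regular cBWT block: each of 0,…,σ-1 twice in increasing order. -/
def patBlock (σ : ℕ) : List ℕ := (List.range σ).flatMap fun c => [c, c]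

/-- The final irregular cBWT block: each of 0,…,σ-3 twice, then σ-2, σ-1, σ-2. -/
def patFinal (σ : ℕ) : List ℕ :=
  ((List.range (σ - 2)).flatMap fun c => [c, c]) ++ [σ - 2, σ - 1, σ - 2]

/-- The canonical cBWT pattern: (σ-1) · (regular block)^m · final block. -/
def pattern (σ m : ℕ) : List ℕ :=
  [σ - 1] ++ (List.replicate m (patBlock σ)).flatten ++ patFinal σ

/-- `S` is 2-branching at order `k` over alphabet {0,…,σ-1}: every (k-1)-gram
occurs and its set of k-gram extensions is {u[0], (u[0]+1) mod σ}. -/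
def TwoBranching (σ k : ℕ) (S : List ℕ) : Prop :=
  ∀ u : List ℕ, u.length = k - 1 → (∀ x ∈ u, x < σ) →
    cOccurs S u ∧ ∀ c, c < σ →
      (cOccurs S (u ++ [c]) ↔ c = u.headD 0 ∨ c = (u.headD 0 + 1) % σ)

/-!
Position `a (2σ + 2) + r` of `S_σ` (`a < σ - 1`, `r < 2σ + 2`) is offset `r` in the block of `a`;
the last two positions hold the final pair. Every cyclic 3-gram of `S_σ` occurs exactly once, so
rotations are ordered by their first three symbols and the sorted order can be written down
explicitly: the rotations beginning with `c < σ - 1` have the 3-grams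
`c0c < c0(c+1) < c1c < c1(c+1) < ⋯ < c(σ-1)c < c(σ-1)(c+1)`, and those beginning with `σ - 1`
follow a similar, slightly irregular pattern. The symbols cyclically preceding the start positions,
taken in this order, form the block `(σ-1) 0 0 1 1 ⋯ (σ-2) (σ-2) (σ-1)` once for each `c < σ - 1`,
followed by `(σ-1) 0 0 ⋯ (σ-3) (σ-3) (σ-2) (σ-1) (σ-2)`; moving the leading `σ - 1` of each block
to the end of the previous one gives the pattern.
-/

theorem List.getD_flatMap_range_of_length_eq {α : Type*} {f : ℕ → List α} {L k a r : ℕ}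
    (hf : ∀ i, (f i).length = L) (ha : a < k) (hr : r < L) (d : α) :
    ((range k).flatMap f).getD (a * L + r) d = (f a).getD r d := by
  induction k with
  | zero => omega
  | succ k ih =>
    have hlen : ((range k).flatMap f).length = k * L := by simp [length_flatMap, hf]
    rw [range_succ, flatMap_append]
    rcases Nat.lt_or_ge a k with h | h
    · have : (a + 1) * L ≤ k * L := Nat.mul_le_mul_right _ h
      rw [getD_append _ _ _ _ (by rw [Nat.succ_mul] at this; omega), ih h]
    · obtain rfl : a = k := by omega
      rw [getD_append_right _ _ _ _ (by omega), hlen, Nat.add_sub_cancel_left, flatMap_singleton]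

theorem List.pairwise_flatMap_range {α : Type*} {R : α → α → Prop} {f : ℕ → List α} {N : ℕ}
    (h₁ : ∀ a < N, (f a).Pairwise R)
    (h₂ : ∀ a b, a < b → b < N → ∀ x ∈ f a, ∀ y ∈ f b, R x y) :
    ((range N).flatMap f).Pairwise R :=
  pairwise_flatMap.2 ⟨fun a ha => h₁ a (mem_range.1 ha),
    pairwise_lt_range.imp_of_mem fun _ hb hab => h₂ _ _ hab (mem_range.1 hb)⟩

theorem List.lt_of_take_lt {α : Type*} [LT α] {u v : List α} {k : ℕ}
    (h : u.take k < v.take k) : u < v := by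
  induction k generalizing u v with
  | zero => simp at h
  | succ k ih =>
    match u, v with
    | [], [] => simp at h
    | [], _ :: _ => exact nil_lt_cons _ _
    | _ :: _, [] => simp at h
    | a :: u, b :: v =>
      simp only [take_succ_cons, cons_lt_cons_iff] at h ⊢
      exact h.imp_right fun ⟨hab, h⟩ => ⟨hab, ih h⟩

theorem List.flatten_replicate_cons_append {α : Type*} (x : α) (B F : List α) (k : ℕ) :
    (replicate k (x :: B)).flatten ++ x :: F = x :: ((replicate k (B ++ [x])).flatten ++ F) := by
  induction k with
  | zero => simp
  | succ k ih => simp [replicate_succ, ih]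

theorem Nat.mul_add_lt_mul_of_lt {a k m r : ℕ} (ha : a < k) (hr : r < m) :
    a * m + r < k * m := by
  have := Nat.mul_le_mul_right m ha
  rw [Nat.succ_mul] at this
  omega

section Rotations

variable {S : List ℕ}

def rotLast (S : List ℕ) (i : ℕ) : ℕ := (rot S i).getD (S.length - 1) 0

theorem rot_eq_rotate {i : ℕ} (h : i ≤ S.length) : rot S i = S.rotate i :=
  (rotate_eq_drop_append_take h).symm

theorem cyc_eq_take_rot {i k : ℕ} (hi : i ≤ S.length) (hk : k ≤ S.length) :
    cyc S i k = (rot S i).take k := by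
  rw [rot_eq_rotate hi]
  refine ext_getElem (by simp [cyc]; omega) fun j h₁ _ => ?_
  have hj : j < S.length := by simp [cyc] at h₁; omega
  simp [cyc, getElem?_eq_getElem (Nat.mod_lt _ (by omega : 0 < S.length)), Nat.add_comm]

theorem rot_lt_rot_of_cyc_lt {i j k : ℕ} (hi : i ≤ S.length) (hj : j ≤ S.length)
    (hk : k ≤ S.length) (h : cyc S i k < cyc S j k) : rot S i < rot S j := by
  rw [cyc_eq_take_rot hi hk, cyc_eq_take_rot hj hk] at h
  exact lt_of_take_lt h

theorem cyc_three (p : ℕ) : cyc S p 3 =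
    [S.getD (p % S.length) 0, S.getD ((p + 1) % S.length) 0, S.getD ((p + 2) % S.length) 0] := by
  simp [cyc, range_succ]

theorem cyc_three_of_lt {p : ℕ} (h : p + 2 < S.length) :
    cyc S p 3 = [S.getD p 0, S.getD (p + 1) 0, S.getD (p + 2) 0] := by
  rw [cyc_three, Nat.mod_eq_of_lt h, Nat.mod_eq_of_lt (by omega : p < S.length),
    Nat.mod_eq_of_lt (by omega : p + 1 < S.length)]

theorem rotLast_zero : rotLast S 0 = S.getD (S.length - 1) 0 := by
  simp [rotLast, rot]

theorem rotLast_of_pos {i : ℕ} (h₀ : 0 < i) (h : i ≤ S.length) :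
    rotLast S i = S.getD (i - 1) 0 := by
  rw [rotLast, rot, getD_append_right _ _ _ _ (by simp; omega), getD_eq_getElem?_getD,
    getElem?_take_of_lt (by simp; omega), ← getD_eq_getElem?_getD]
  congr 1
  simp; omega

theorem cBWT_eq_map_of_pairwise {l : List ℕ} (hl : ∀ i ∈ l, i < S.length)
    (hlen : l.length = S.length) (h : l.Pairwise fun i j => rot S i < rot S j) :
    cBWT S = l.map (rotLast S) := by
  have hnodup : l.Nodup := h.imp fun {i j} hij (e : i = j) => lt_irrefl _ (e ▸ hij)
  have hperm : l.Perm (range S.length) :=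
    (subperm_of_subset hnodup fun i hi => mem_range.2 (hl i hi)).perm_of_length_le
      (by simp [hlen])
  have hsort : ((range S.length).map (rot S)).insertionSort (· ≤ ·) = l.map (rot S) :=
    Perm.eq_of_pairwise' (pairwise_insertionSort _ _) (pairwise_map.2 (h.imp le_of_lt))
      ((perm_insertionSort _ _).trans (hperm.map _).symm)
  rw [cBWT, hsort, map_map]
  rfl

end Rotations

section Sstr

variable {σ : ℕ}

theorem length_block (σ a : ℕ) : (block σ a).length = 2 * σ + 2 := by
  simp [block, length_flatMap]; ring

theorem getD_block_even {a b : ℕ} (hb : b ≤ σ) : (block σ a).getD (2 * b) 0 = a := by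
  rcases hb.lt_or_eq with hb | rfl
  · rw [block, getD_append _ _ _ _ (by simp [length_flatMap]; omega), Nat.mul_comm,
      ← Nat.add_zero (b * 2),
      getD_flatMap_range_of_length_eq (f := fun b => [a, b]) (fun _ => rfl) hb (by omega)]
    rfl
  · rw [block, getD_append_right _ _ _ _ (by simp [length_flatMap]; omega)]
    simp [length_flatMap, Nat.mul_comm]

theorem getD_block_odd {a b : ℕ} (hb : b ≤ σ) :
    (block σ a).getD (2 * b + 1) 0 = min b (σ - 1) := by
  rcases hb.lt_or_eq with hb | rfl
  · rw [block, getD_append _ _ _ _ (by simp [length_flatMap]; omega), Nat.mul_comm,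
      getD_flatMap_range_of_length_eq (f := fun b => [a, b]) (fun _ => rfl) hb (by omega)]
    simp; omega
  · rw [block, getD_append_right _ _ _ _ (by simp [length_flatMap]; omega)]
    simp [length_flatMap, Nat.mul_comm]

theorem length_Sstr (σ : ℕ) : (Sstr σ).length = (σ - 1) * (2 * σ + 2) + 2 := by
  simp [Sstr, length_flatMap, length_block]

theorem block_end_lt_tail {a : ℕ} (ha : a < σ - 1) :
    a * (2 * σ + 2) + (2 * σ + 1) < (σ - 1) * (2 * σ + 2) :=
  Nat.mul_add_lt_mul_of_lt ha (by omega)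

theorem three_le_length_Sstr (hσ : 2 ≤ σ) : 3 ≤ (Sstr σ).length := by
  have : 0 < (σ - 1) * (2 * σ + 2) := Nat.mul_pos (by omega) (by omega)
  rw [length_Sstr]; omega

theorem getD_Sstr_of_lt {a r : ℕ} (ha : a < σ - 1) (hr : r < 2 * σ + 2) :
    (Sstr σ).getD (a * (2 * σ + 2) + r) 0 = (block σ a).getD r 0 := by
  have hlt := Nat.mul_add_lt_mul_of_lt ha hr
  rw [Sstr, getD_append _ _ _ _ (by simpa [length_flatMap, length_block] using hlt),
    getD_flatMap_range_of_length_eq (length_block σ) ha hr]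

theorem getD_Sstr_even {a b p : ℕ} (ha : a < σ - 1) (hb : b ≤ σ)
    (hp : p = a * (2 * σ + 2) + 2 * b) : (Sstr σ).getD p 0 = a := by
  rw [hp, getD_Sstr_of_lt ha (by omega), getD_block_even hb]

theorem getD_Sstr_odd {a b p : ℕ} (ha : a < σ - 1) (hb : b ≤ σ)
    (hp : p = a * (2 * σ + 2) + 2 * b + 1) : (Sstr σ).getD p 0 = min b (σ - 1) := by
  rw [hp, Nat.add_assoc, getD_Sstr_of_lt ha (by omega), getD_block_odd hb]

theorem getD_Sstr_tail {j p : ℕ} (hj : j < 2) (hp : p = (σ - 1) * (2 * σ + 2) + j) :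
    (Sstr σ).getD p 0 = σ - 1 := by
  rw [Sstr, getD_append_right _ _ _ _ (by simp [length_flatMap, length_block]; omega)]
  interval_cases j <;> simp [hp, length_flatMap, length_block]

theorem cyc_Sstr_even {a b p : ℕ} (ha : a < σ - 1) (hb : b < σ)
    (hp : p = a * (2 * σ + 2) + 2 * b) : cyc (Sstr σ) p 3 = [a, b, a] := by
  have := Nat.mul_add_lt_mul_of_lt ha (m := 2 * σ + 2) (r := 2 * b + 2) (by omega)
  rw [cyc_three_of_lt (by rw [length_Sstr]; omega), getD_Sstr_even ha hb.le hp,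
    getD_Sstr_odd ha hb.le (by omega), getD_Sstr_even ha (b := b + 1) hb (by omega)]
  simp; omega

theorem cyc_Sstr_odd {a b p : ℕ} (ha : a < σ - 1) (hb : b < σ)
    (hp : p = a * (2 * σ + 2) + 2 * b + 1) :
    cyc (Sstr σ) p 3 = [b, a, min (b + 1) (σ - 1)] := by
  have := Nat.mul_add_lt_mul_of_lt ha (m := 2 * σ + 2) (r := 2 * b + 3) (by omega)
  rw [cyc_three_of_lt (by rw [length_Sstr]; omega), getD_Sstr_odd ha hb.le hp,
    getD_Sstr_even ha (b := b + 1) hb (by omega), getD_Sstr_odd ha (b := b + 1) hb (by omega)]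
  simp; omega

theorem cyc_Sstr_repeat {a p : ℕ} (ha : a < σ - 1) (hp : p = a * (2 * σ + 2) + 2 * σ) :
    cyc (Sstr σ) p 3 = [a, σ - 1, a + 1] := by
  have hnext : p + 2 = (a + 1) * (2 * σ + 2) := by rw [Nat.succ_mul]; omega
  have := Nat.mul_le_mul_right (2 * σ + 2) (show a + 1 ≤ σ - 1 by omega)
  rw [cyc_three_of_lt (by rw [length_Sstr]; omega), getD_Sstr_even ha le_rfl hp,
    getD_Sstr_odd ha le_rfl (by omega)]
  rcases (show a + 1 < σ - 1 ∨ a + 1 = σ - 1 by omega) with h | h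
  · rw [getD_Sstr_even h (b := 0) (by omega) (by omega)]
    simp
  · rw [getD_Sstr_tail (j := 0) (by omega) (by rw [hnext, h]; rfl)]
    simp; omega

theorem cyc_Sstr_repeat_succ {a p : ℕ} (ha : a + 1 < σ - 1)
    (hp : p = a * (2 * σ + 2) + 2 * σ + 1) : cyc (Sstr σ) p 3 = [σ - 1, a + 1, 0] := by
  have hnext : p + 1 = (a + 1) * (2 * σ + 2) := by rw [Nat.succ_mul]; omega
  have := Nat.mul_add_lt_mul_of_lt ha (m := 2 * σ + 2) (r := 1) (by omega)
  rw [cyc_three_of_lt (by rw [length_Sstr]; omega), getD_Sstr_odd (b := σ) (by omega) le_rfl hp,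
    getD_Sstr_even ha (b := 0) (by omega) (by omega), getD_Sstr_odd ha (b := 0) (by omega)
      (by omega)]
  simp

theorem cyc_Sstr_before_tail {p : ℕ} (hσ : 2 ≤ σ) (hp : p = (σ - 2) * (2 * σ + 2) + 2 * σ + 1) :
    cyc (Sstr σ) p 3 = [σ - 1, σ - 1, σ - 1] := by
  have hnext : p + 1 = (σ - 1) * (2 * σ + 2) := by
    rw [show σ - 1 = σ - 2 + 1 by omega, Nat.succ_mul]; omega
  rw [cyc_three_of_lt (by rw [length_Sstr]; omega), getD_Sstr_odd (b := σ) (by omega) le_rfl hp,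
    getD_Sstr_tail (j := 0) (by omega) (by omega), getD_Sstr_tail (j := 1) (by omega) (by omega)]
  simp

theorem cyc_Sstr_tail (hσ : 2 ≤ σ) :
    cyc (Sstr σ) ((σ - 1) * (2 * σ + 2)) 3 = [σ - 1, σ - 1, 0] := by
  rw [cyc_three, length_Sstr, Nat.mod_eq_of_lt (by omega), Nat.mod_eq_of_lt (by omega),
    Nat.mod_self, getD_Sstr_tail (j := 0) (by omega) (by omega),
    getD_Sstr_tail (j := 1) (by omega) rfl, getD_Sstr_even (a := 0) (b := 0) (by omega)
      (by omega) (by simp)]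

theorem cyc_Sstr_tail_succ (hσ : 2 ≤ σ) :
    cyc (Sstr σ) ((σ - 1) * (2 * σ + 2) + 1) 3 = [σ - 1, 0, 0] := by
  rw [cyc_three, length_Sstr, Nat.mod_eq_of_lt (by omega), Nat.add_assoc, Nat.mod_self,
    show (σ - 1) * (2 * σ + 2) + (1 + 2) = 1 + ((σ - 1) * (2 * σ + 2) + 2) by omega,
    Nat.add_mod_right, Nat.mod_eq_of_lt (by omega),
    getD_Sstr_tail (j := 1) (by omega) rfl, getD_Sstr_even (a := 0) (b := 0) (by omega)
      (by omega) (by simp), getD_Sstr_odd (a := 0) (b := 0) (by omega) (by omega) (by simp)]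
  simp

end Sstr

section SortedOrder

variable {σ : ℕ}

def sortedTrigramsBlock (σ c : ℕ) : List (List ℕ) :=
  [c, 0, c] :: ((range (σ - 1)).flatMap fun k => [[c, k, c + 1], [c, k + 1, c]]) ++
    [[c, σ - 1, c + 1]]

def sortedTrigramsLast (σ : ℕ) : List (List ℕ) :=
  [σ - 1, 0, 0] :: ((range (σ - 2)).flatMap fun a => [[σ - 1, a, σ - 1], [σ - 1, a + 1, 0]]) ++
    [[σ - 1, σ - 2, σ - 1], [σ - 1, σ - 1, 0], [σ - 1, σ - 1, σ - 1]]

def sortedTrigrams (σ : ℕ) : List (List ℕ) :=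
  (range (σ - 1)).flatMap (sortedTrigramsBlock σ) ++ sortedTrigramsLast σ

def sortedStartsBlock (σ c : ℕ) : List ℕ :=
  c * (2 * σ + 2) :: ((range (σ - 1)).flatMap fun k =>
    [k * (2 * σ + 2) + 2 * c + 1, c * (2 * σ + 2) + 2 * (k + 1)]) ++ [c * (2 * σ + 2) + 2 * σ]

def sortedStartsLast (σ : ℕ) : List ℕ :=
  ((σ - 1) * (2 * σ + 2) + 1) :: ((range (σ - 2)).flatMap fun a =>
    [a * (2 * σ + 2) + 2 * (σ - 1) + 1, a * (2 * σ + 2) + 2 * σ + 1]) ++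
    [(σ - 2) * (2 * σ + 2) + 2 * (σ - 1) + 1, (σ - 1) * (2 * σ + 2),
      (σ - 2) * (2 * σ + 2) + 2 * σ + 1]

def sortedStarts (σ : ℕ) : List ℕ :=
  (range (σ - 1)).flatMap (sortedStartsBlock σ) ++ sortedStartsLast σ

theorem pairwise_sortedTrigramsBlock (σ c : ℕ) : (sortedTrigramsBlock σ c).Pairwise (· < ·) := by
  simp only [sortedTrigramsBlock, cons_append, pairwise_cons, pairwise_append, forall_mem_append,
    forall_mem_flatMap, forall_mem_cons, mem_range]
  refine ⟨?_, pairwise_flatMap_range ?_ ?_, ?_, ?_⟩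
  all_goals simp [cons_lt_cons_iff]
  all_goals grind

theorem pairwise_sortedTrigramsLast (hσ : 2 ≤ σ) : (sortedTrigramsLast σ).Pairwise (· < ·) := by
  simp only [sortedTrigramsLast, cons_append, pairwise_cons, pairwise_append, forall_mem_append,
    forall_mem_flatMap, forall_mem_cons, mem_range]
  refine ⟨?_, pairwise_flatMap_range ?_ ?_, ?_, ?_⟩
  all_goals simp [cons_lt_cons_iff]
  all_goals grind

theorem exists_eq_cons_of_mem_sortedTrigramsBlock {c : ℕ} {x : List ℕ}
    (hx : x ∈ sortedTrigramsBlock σ c) : ∃ t, x = c :: t := by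
  simp only [sortedTrigramsBlock, cons_append, mem_cons, mem_append, mem_flatMap] at hx
  aesop

theorem exists_eq_cons_of_mem_sortedTrigramsLast {x : List ℕ}
    (hx : x ∈ sortedTrigramsLast σ) : ∃ t, x = (σ - 1) :: t := by
  simp only [sortedTrigramsLast, cons_append, mem_cons, mem_append, mem_flatMap] at hx
  aesop

theorem pairwise_sortedTrigrams (hσ : 2 ≤ σ) : (sortedTrigrams σ).Pairwise (· < ·) := by
  rw [sortedTrigrams, pairwise_append]
  refine ⟨pairwise_flatMap_range (fun c _ => pairwise_sortedTrigramsBlock σ c) ?_,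
    pairwise_sortedTrigramsLast hσ, ?_⟩
  · intro c c' hc _ x hx y hy
    obtain ⟨t, rfl⟩ := exists_eq_cons_of_mem_sortedTrigramsBlock hx
    obtain ⟨t', rfl⟩ := exists_eq_cons_of_mem_sortedTrigramsBlock hy
    exact cons_lt_cons_iff.2 (Or.inl hc)
  · simp only [mem_flatMap, mem_range]
    rintro x ⟨c, hc, hx⟩ y hy
    obtain ⟨t, rfl⟩ := exists_eq_cons_of_mem_sortedTrigramsBlock hx
    obtain ⟨t', rfl⟩ := exists_eq_cons_of_mem_sortedTrigramsLast hy
    exact cons_lt_cons_iff.2 (Or.inl hc)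

theorem map_cyc_sortedStartsBlock {c : ℕ} (hc : c < σ - 1) :
    (sortedStartsBlock σ c).map (cyc (Sstr σ) · 3) = sortedTrigramsBlock σ c := by
  simp only [sortedStartsBlock, sortedTrigramsBlock, map_cons, map_append, map_flatMap, map_nil]
  rw [cyc_Sstr_even hc (b := 0) (by omega) (by omega), cyc_Sstr_repeat hc rfl]
  congr 2
  refine flatMap_congr fun k hk => ?_
  rw [mem_range] at hk
  rw [cyc_Sstr_odd hk (by omega) rfl, cyc_Sstr_even hc (by omega) rfl]
  simp; omega

theorem map_cyc_sortedStartsLast (hσ : 2 ≤ σ) :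
    (sortedStartsLast σ).map (cyc (Sstr σ) · 3) = sortedTrigramsLast σ := by
  simp only [sortedStartsLast, sortedTrigramsLast, map_cons, map_append, map_flatMap, map_nil]
  rw [cyc_Sstr_tail_succ hσ, cyc_Sstr_odd (by omega) (by omega) rfl, cyc_Sstr_tail hσ,
    cyc_Sstr_before_tail hσ rfl]
  congr 2
  · refine flatMap_congr fun a ha => ?_
    rw [mem_range] at ha
    rw [cyc_Sstr_odd (by omega) (by omega) rfl, cyc_Sstr_repeat_succ (by omega) rfl]
    simp
  · simp

theorem map_cyc_sortedStarts (hσ : 2 ≤ σ) :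
    (sortedStarts σ).map (cyc (Sstr σ) · 3) = sortedTrigrams σ := by
  rw [sortedStarts, sortedTrigrams, map_append, map_flatMap, map_cyc_sortedStartsLast hσ]
  congr 1
  exact flatMap_congr fun c hc => map_cyc_sortedStartsBlock (mem_range.1 hc)

theorem lt_length_of_mem_sortedStarts (hσ : 2 ≤ σ) {p : ℕ} (hp : p ∈ sortedStarts σ) :
    p < (Sstr σ).length := by
  rw [length_Sstr]
  simp only [sortedStarts, sortedStartsBlock, sortedStartsLast, cons_append, mem_append,
    mem_flatMap, mem_range, mem_cons, not_mem_nil, or_false] at hp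
  rcases hp with ⟨c, hc, rfl | ⟨k, hk, rfl | rfl⟩ | rfl⟩ | rfl | ⟨a, ha, rfl | rfl⟩ | rfl | rfl |
    rfl
  · have := block_end_lt_tail hc; omega
  · have := block_end_lt_tail hk; omega
  · have := block_end_lt_tail hc; omega
  · have := block_end_lt_tail hc; omega
  · omega
  · have := block_end_lt_tail (show a < σ - 1 by omega); omega
  · have := block_end_lt_tail (show a < σ - 1 by omega); omega
  all_goals have := block_end_lt_tail (show σ - 2 < σ - 1 by omega); omega

theorem length_sortedStarts (hσ : 2 ≤ σ) : (sortedStarts σ).length = (Sstr σ).length := by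
  obtain ⟨s, rfl⟩ : ∃ s, σ = s + 2 := ⟨σ - 2, by omega⟩
  simp [sortedStarts, sortedStartsBlock, sortedStartsLast, length_flatMap, length_Sstr]
  ring

theorem pairwise_rot_sortedStarts (hσ : 2 ≤ σ) :
    (sortedStarts σ).Pairwise fun i j => rot (Sstr σ) i < rot (Sstr σ) j := by
  have h := pairwise_sortedTrigrams hσ
  rw [← map_cyc_sortedStarts hσ, pairwise_map] at h
  exact h.imp_of_mem fun hi hj hij => rot_lt_rot_of_cyc_lt
    (lt_length_of_mem_sortedStarts hσ hi).le (lt_length_of_mem_sortedStarts hσ hj).le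
    (three_le_length_Sstr hσ) hij

theorem rotLast_Sstr_mul {c : ℕ} (hσ : 1 ≤ σ) (hc : c ≤ σ - 1) :
    rotLast (Sstr σ) (c * (2 * σ + 2)) = σ - 1 := by
  rcases c with _ | c
  · rw [Nat.zero_mul, rotLast_zero, getD_Sstr_tail (j := 1) (by omega) (by rw [length_Sstr]; omega)]
  · have := Nat.mul_le_mul_right (2 * σ + 2) hc
    rw [rotLast_of_pos (by rw [Nat.succ_mul]; omega) (by rw [length_Sstr]; omega),
      getD_Sstr_odd (a := c) (b := σ) (by omega) le_rfl (by rw [Nat.succ_mul]; omega)]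
    omega

theorem map_rotLast_sortedStartsBlock {c : ℕ} (hc : c < σ - 1) :
    (sortedStartsBlock σ c).map (rotLast (Sstr σ)) =
      (σ - 1) :: (((range (σ - 1)).flatMap fun k => [k, k]) ++ [σ - 1]) := by
  have hc' := block_end_lt_tail hc
  simp only [sortedStartsBlock, map_cons, map_append, map_flatMap, map_nil, cons_append]
  rw [rotLast_Sstr_mul (by omega) hc.le, rotLast_of_pos (by omega) (by rw [length_Sstr]; omega),
    getD_Sstr_odd hc (b := σ - 1) (by omega) (by omega)]
  congr 2
  · refine flatMap_congr fun k hk => ?_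
    rw [mem_range] at hk
    have hk' := block_end_lt_tail hk
    rw [rotLast_of_pos (by omega) (by rw [length_Sstr]; omega),
      rotLast_of_pos (by omega) (by rw [length_Sstr]; omega),
      getD_Sstr_even hk (b := c) (by omega) (by omega),
      getD_Sstr_odd hc (b := k) (by omega) (by omega)]
    simp; omega
  · simp

theorem map_rotLast_sortedStartsLast (hσ : 2 ≤ σ) :
    (sortedStartsLast σ).map (rotLast (Sstr σ)) = (σ - 1) :: patFinal σ := by
  have hlast := block_end_lt_tail (show σ - 2 < σ - 1 by omega)
  simp only [sortedStartsLast, patFinal, map_cons, map_append, map_flatMap, map_nil, cons_append]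
  rw [rotLast_of_pos (by omega) (by rw [length_Sstr]; omega),
    getD_Sstr_tail (j := 0) (by omega) (by omega),
    rotLast_of_pos (by omega) (by rw [length_Sstr]; omega),
    getD_Sstr_even (a := σ - 2) (b := σ - 1) (by omega) (by omega) (by omega),
    rotLast_Sstr_mul (by omega) le_rfl,
    rotLast_of_pos (by omega) (by rw [length_Sstr]; omega),
    getD_Sstr_even (a := σ - 2) (b := σ) (by omega) le_rfl (by omega)]
  congr 2
  · refine flatMap_congr fun a ha => ?_
    rw [mem_range] at ha
    have ha' := block_end_lt_tail (show a < σ - 1 by omega)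
    rw [rotLast_of_pos (by omega) (by rw [length_Sstr]; omega),
      rotLast_of_pos (by omega) (by rw [length_Sstr]; omega),
      getD_Sstr_even (a := a) (b := σ - 1) (by omega) (by omega) (by omega),
      getD_Sstr_even (a := a) (b := σ) (by omega) le_rfl (by omega)]

theorem patBlock_eq (hσ : 1 ≤ σ) :
    patBlock σ = ((range (σ - 1)).flatMap fun k => [k, k]) ++ [σ - 1, σ - 1] := by
  obtain ⟨s, rfl⟩ : ∃ s, σ = s + 1 := ⟨σ - 1, by omega⟩
  simp [patBlock, range_succ]

end SortedOrder

/-- for σ ≥ 3 the cyclic BWT of S_σ equals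
(σ-1)·(0011⋯(σ-1)(σ-1))^{σ-1}·0011⋯(σ-3)(σ-3)(σ-2)(σ-1)(σ-2). -/
theorem stmt8 (σ : ℕ) (hσ : 3 ≤ σ) :
    cBWT (Sstr σ) = pattern σ (σ - 1) := by
  rw [cBWT_eq_map_of_pairwise (fun _ => lt_length_of_mem_sortedStarts (by omega))
      (length_sortedStarts (by omega)) (pairwise_rot_sortedStarts (by omega)),
    sortedStarts, map_append, map_flatMap,
    flatMap_congr fun c hc => map_rotLast_sortedStartsBlock (mem_range.1 hc),
    map_rotLast_sortedStartsLast (by omega), flatMap_def, map_const', length_range,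
    flatten_replicate_cons_append, pattern, patBlock_eq (by omega)]
  simp
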